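/- arXiv:2210.01599 — 7 statements merged into one kernel-verified Lean document; each statement's English description precedes it below -/
import Mathlib

section
/- Let A be a commutative ring, π ∈ A, and let B be an A-algebra with structure map ι : A → B. Suppose there exists an A-linear map ρ : B → A such that ρ ∘ ι = π · id_A and ι ∘ ρ = π · id_B. Then for every A-module E, the module Tor₁^A(B, E) is annihilated by π. -/
open CategoryTheory

universe u

namespace TorAnnihilAux

open CategoryTheory.MonoidalCategory CategoryTheory.Limits

section

variable {C : Type*} [Category C] [Abelian C] {ι : Type*} {c : ComplexShape ι}
  {R : Type*} [Semiring R] [Linear R C]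

lemma homologyMap_smul {K L : HomologicalComplex C c} (f : K ⟶ L) (a : R) (i : ι) :
    HomologicalComplex.homologyMap (a • f) i = a • HomologicalComplex.homologyMap f i := by
  have h : (HomologicalComplex.shortComplexFunctor C c i).map (a • f)
      = a • (HomologicalComplex.shortComplexFunctor C c i).map f := rfl
  dsimp [HomologicalComplex.homologyMap]
  rw [h, ShortComplex.homologyMap_smul]
  rfl

end

section

variable {C : Type*} [Category C] [Abelian C] [HasProjectiveResolutions C]
  {D : Type*} [Category D] [Abelian D]

/-- An isomorphism of functors induces an isomorphism of left derived objects. -/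
noncomputable def leftDerivedObjIsoOfNatIso {F G : C ⥤ D} [F.Additive] [G.Additive]
    (e : F ≅ G) (n : ℕ) (X : C) :
    (F.leftDerived n).obj X ≅ (G.leftDerived n).obj X where
  hom := (NatTrans.leftDerived e.hom n).app X
  inv := (NatTrans.leftDerived e.inv n).app X
  hom_inv_id := by
    rw [← NatTrans.comp_app, ← NatTrans.leftDerived_comp, e.hom_inv_id,
      NatTrans.leftDerived_id, NatTrans.id_app]
  inv_hom_id := by
    rw [← NatTrans.comp_app, ← NatTrans.leftDerived_comp, e.inv_hom_id,
      NatTrans.leftDerived_id, NatTrans.id_app]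

lemma isZero_leftDerived_id_obj (X : C) (n : ℕ) :
    IsZero (((𝟭 C).leftDerived (n + 1)).obj X) := by
  refine IsZero.of_iso ?_ ((projectiveResolution X).isoLeftDerivedObj (𝟭 C) (n + 1))
  refine IsZero.of_iso ?_ ((HomologicalComplex.homologyFunctor C _ (n + 1)).mapIso
    ((Functor.mapHomologicalComplexIdIso C (ComplexShape.down ℕ)).app
      (projectiveResolution X).complex))
  have := (projectiveResolution X).complex_exactAt_succ n
  rw [HomologicalComplex.exactAt_iff_isZero_homology] at this
  exact this

end

section

variable (C : Type*) [Category C] [Abelian C] [MonoidalCategory C]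
  [MonoidalPreadditive C] [HasProjectiveResolutions C]

lemma isZero_Tor_succ_unit (Y : C) (n : ℕ) :
    IsZero (((Tor C (n + 1)).obj (𝟙_ C)).obj Y) :=
  IsZero.of_iso (isZero_leftDerived_id_obj Y n)
    (leftDerivedObjIsoOfNatIso (leftUnitorNatIso C) (n + 1) Y)

end

end TorAnnihilAux

open TorAnnihilAux CategoryTheory.MonoidalCategory CategoryTheory.Limits

/-- If `B` is an `A`-algebra admitting an `A`-linear map `ρ : B → A` with
`ρ ∘ ι = π · id_A` and `ι ∘ ρ = π · id_B` (where `ι` is the structure map),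
then for every `A`-module `E`, `Tor₁^A(B, E)` is annihilated by `π`. -/
theorem tor_one_annihilated_of_retraction_up_to_pi
    (A : Type u) [CommRing A] (π : A)
    (B : Type u) [CommRing B] [Algebra A B]
    (ρ : B →ₗ[A] A)
    (hρι : ∀ a : A, ρ (algebraMap A B a) = π * a)
    (hιρ : ∀ b : B, algebraMap A B (ρ b) = π • b)
    (E : Type u) [AddCommGroup E] [Module A E]
    (x : (((Tor (ModuleCat.{u} A) 1).obj (ModuleCat.of A B)).obj (ModuleCat.of A E))) :
    π • x = 0 := by
  let B' : ModuleCat.{u} A := ModuleCat.of A B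
  let E' : ModuleCat.{u} A := ModuleCat.of A E
  let g₁ : B' ⟶ ModuleCat.of A A := ModuleCat.ofHom ρ
  let g₂ : ModuleCat.of A A ⟶ B' := ModuleCat.ofHom (Algebra.linearMap A B)
  have hg : g₁ ≫ g₂ = π • 𝟙 B' := by
    ext b
    change algebraMap A B (ρ b) = π • b
    exact hιρ b
  -- the key computation: the Tor functor is `A`-linear in the first variable
  have key : ((Tor (ModuleCat.{u} A) 1).map (π • 𝟙 B')).app E'
      = π • 𝟙 (((Tor (ModuleCat.{u} A) 1).obj B').obj E') := by
    let P := projectiveResolution E'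
    let α := (tensoringLeft (ModuleCat.{u} A)).map (π • 𝟙 B')
    have hφ : (NatTrans.mapHomologicalComplex α (ComplexShape.down ℕ)).app P.complex
        = π • 𝟙 ((((tensoringLeft (ModuleCat.{u} A)).obj B').mapHomologicalComplex
            (ComplexShape.down ℕ)).obj P.complex) := by
      ext n : 1
      show (π • 𝟙 B') ▷ (P.complex.X n) = _
      rw [MonoidalLinear.smul_whiskerRight, MonoidalCategory.id_whiskerRight]
      rfl
    have h1 : ((Tor (ModuleCat.{u} A) 1).map (π • 𝟙 B')).app E'
        = (NatTrans.leftDerived α 1).app E' := rfl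
    rw [h1, ProjectiveResolution.leftDerived_app_eq α P 1, hφ]
    rw [show ∀ (K : HomologicalComplex (ModuleCat.{u} A) (ComplexShape.down ℕ))
        (f : K ⟶ K), (HomologicalComplex.homologyFunctor (ModuleCat.{u} A)
          (ComplexShape.down ℕ) 1).map f = HomologicalComplex.homologyMap f 1
        from fun _ _ => rfl]
    rw [homologyMap_smul, HomologicalComplex.homologyMap_id]
    erw [Linear.smul_comp, Linear.comp_smul]
    erw [Category.id_comp, Iso.hom_inv_id]
    rfl
  have h0 : IsZero (((Tor (ModuleCat.{u} A) 1).obj (ModuleCat.of A A)).obj E') :=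
    isZero_Tor_succ_unit (ModuleCat.{u} A) E' 0
  have : π • x = (((Tor (ModuleCat.{u} A) 1).map (g₁ ≫ g₂)).app E') x := by
    rw [hg, key]; rfl
  rw [this, Functor.map_comp, NatTrans.comp_app,
    h0.eq_of_tgt (((Tor (ModuleCat.{u} A) 1).map g₁).app E') 0, Limits.zero_comp]
  rfl
end

section
/- Let A be a commutative ring, N a positive integer, and B an A-algebra such that there is an A-linear map ρ : B → A with ρ ∘ ι = N · id_A and ι ∘ ρ = N · id_B (ι the structure map). Then for every A-module E, Tor₁^A(B, E ⊗_ℤ ℚ) = 0; in particular, for any injection E' → E of A-modules that are ℚ-vector spaces, the induced map B ⊗_A E' → B ⊗_A E is injective. -/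
open CategoryTheory TensorProduct

universe u

section Aux

open CategoryTheory.Limits CategoryTheory.MonoidalCategory

lemma TorAux.nsmul_whiskerRight {C : Type*} [Category C] [MonoidalCategory C]
    [Preadditive C] [MonoidalPreadditive C] (n : ℕ) {Y Z : C} (f : Y ⟶ Z) (X : C) :
    (n • f) ▷ X = n • (f ▷ X) :=
  (AddMonoidHom.mk' (fun g : Y ⟶ Z => g ▷ X)
    (fun g h => MonoidalPreadditive.add_whiskerRight g h)).map_nsmul n f

lemma TorAux.natTrans_leftDerived_nsmul_id_app {C : Type*} [Category C] {D : Type*} [Category D]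
    [Abelian C] [HasProjectiveResolutions C] [Abelian D]
    (F : C ⥤ D) [F.Additive] (n k : ℕ) (X : C) :
    (NatTrans.leftDerived (n • 𝟙 F) k).app X = n • 𝟙 ((F.leftDerived k).obj X) := by
  have P : ProjectiveResolution X := (HasProjectiveResolution.out).some
  rw [P.leftDerived_app_eq (n • 𝟙 F) k]
  have h1 : (NatTrans.mapHomologicalComplex (n • 𝟙 F) (ComplexShape.down ℕ)).app P.complex
      = n • 𝟙 ((F.mapHomologicalComplex (ComplexShape.down ℕ)).obj P.complex) := by
    ext i
    simp [NatTrans.app_nsmul]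
    rfl
  rw [h1, Functor.map_nsmul, CategoryTheory.Functor.map_id]
  simp

lemma TorAux.leftDerived_map_nsmul_id {C : Type*} [Category C] {D : Type*} [Category D]
    [Abelian C] [HasProjectiveResolutions C] [Abelian D]
    (F : C ⥤ D) [F.Additive] (n k : ℕ) (X : C) :
    (F.leftDerived k).map (n • 𝟙 X) = n • 𝟙 ((F.leftDerived k).obj X) := by
  have P : ProjectiveResolution X := (HasProjectiveResolution.out).some
  rw [F.leftDerived_map_eq k (n • 𝟙 X) (n • 𝟙 P.complex) (by
    rw [Preadditive.nsmul_comp, Functor.map_nsmul, CategoryTheory.Functor.map_id,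
      Preadditive.comp_nsmul, Category.id_comp, Category.comp_id])]
  rw [Functor.map_nsmul, CategoryTheory.Functor.map_id]
  simp

lemma TorAux.isZero_leftDerived_tensorUnit_obj {C : Type*} [Category C] [MonoidalCategory C]
    [Abelian C] [MonoidalPreadditive C] [HasProjectiveResolutions C] (k : ℕ) (X : C) :
    IsZero ((((tensoringLeft C).obj (𝟙_ C)).leftDerived (k + 1)).obj X) := by
  have P : ProjectiveResolution X := (HasProjectiveResolution.out).some
  refine IsZero.of_iso ?_ (P.isoLeftDerivedObj ((tensoringLeft C).obj (𝟙_ C)) (k + 1))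
  refine IsZero.of_iso ?_
    ((HomologicalComplex.homologyFunctor C (ComplexShape.down ℕ) (k + 1)).mapIso
      (HomologicalComplex.Hom.isoOfComponents (fun i => λ_ (P.complex.X i)) ?_))
  · rw [show ((HomologicalComplex.homologyFunctor C (ComplexShape.down ℕ) (k + 1)).obj
        P.complex) = P.complex.homology (k + 1) from rfl,
      ← HomologicalComplex.exactAt_iff_isZero_homology]
    exact P.complex_exactAt_succ k
  · intro i j hij
    exact (leftUnitor_naturality _).symm

lemma TorAux.nsmul_inv_smul {N : ℕ} (hN : 0 < N) {V : Type*} [AddCommGroup V] [Module ℚ V]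
    (v : V) : N • ((N : ℚ)⁻¹ • v) = v := by
  rw [← Nat.cast_smul_eq_nsmul ℚ, smul_smul,
    mul_inv_cancel₀ (Nat.cast_ne_zero.mpr hN.ne'), one_smul]

end Aux

open CategoryTheory.MonoidalCategory CategoryTheory.Limits

/-- If `B` is an `A`-algebra admitting an `A`-linear map `ρ : B → A` with
`ρ ∘ ι = N · id_A` and `ι ∘ ρ = N · id_B` for a positive integer `N`, then for every
`A`-module `E` we have `Tor₁^A(B, E ⊗_ℤ ℚ) = 0`; in particular, for any injection
`E' → E` of `A`-modules which are `ℚ`-vector spaces, the induced map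
`B ⊗_A E' → B ⊗_A E` is injective. -/
theorem tor_one_rat_eq_zero_of_retraction_up_to_N
    (A : Type u) [CommRing A] (N : ℕ) (hN : 0 < N)
    (B : Type u) [CommRing B] [Algebra A B]
    (ρ : B →ₗ[A] A)
    (hρι : ∀ a : A, ρ (algebraMap A B a) = N * a)
    (hιρ : ∀ b : B, algebraMap A B (ρ b) = N • b) :
    (∀ (E : Type u) [AddCommGroup E] [Module A E],
      ∀ x : (((Tor (ModuleCat.{u} A) 1).obj (ModuleCat.of A B)).obj
        (ModuleCat.of A (E ⊗[ℤ] ℚ))), x = 0) ∧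
    (∀ (E' E : Type u) [AddCommGroup E'] [Module A E'] [Module ℚ E'] [SMulCommClass ℚ A E']
      [AddCommGroup E] [Module A E] [Module ℚ E] [SMulCommClass ℚ A E]
      (f : E' →ₗ[A] E), Function.Injective f →
        Function.Injective (LinearMap.lTensor B f)) := by
  constructor
  · intro E _ _ x
    let C := ModuleCat.{u} A
    let M : C := ModuleCat.of A (E ⊗[ℤ] ℚ)
    let B' : C := ModuleCat.of A B
    let A' : C := ModuleCat.of A A
    let ι' : A' ⟶ B' := ModuleCat.ofHom (Algebra.linearMap A B)
    let ρ' : B' ⟶ A' := ModuleCat.ofHom ρ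
    have hcomp : ρ' ≫ ι' = (N : ℕ) • 𝟙 B' := by
      ext b
      show algebraMap A B (ρ b) = (N : ℕ) • b
      exact hιρ b
    -- `Tor₁(A, M) = 0`
    have hzero0 : Limits.IsZero (((Tor C 1).obj A').obj M) :=
      TorAux.isZero_leftDerived_tensorUnit_obj (C := C) 0 M
    have hx0 : ((Tor C 1).map ρ').app M x = 0 := by
      have h1 : (𝟙 (((Tor C 1).obj A').obj M)) = 0 := hzero0.eq_of_src _ _
      calc ((Tor C 1).map ρ').app M x
          = (𝟙 (((Tor C 1).obj A').obj M)) (((Tor C 1).map ρ').app M x) := rfl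
        _ = (0 : ((Tor C 1).obj A').obj M ⟶ ((Tor C 1).obj A').obj M)
              (((Tor C 1).map ρ').app M x) := by rw [h1]
        _ = 0 := rfl
    have hsmul : (((Tor C 1).map (ρ' ≫ ι')).app M) x = 0 := by
      rw [Functor.map_comp]
      show ((Tor C 1).map ι').app M (((Tor C 1).map ρ').app M x) = 0
      rw [hx0, map_zero]
    have hτ : (tensoringLeft C).map (ρ' ≫ ι')
        = (N : ℕ) • 𝟙 ((tensoringLeft C).obj B') := by
      rw [hcomp]
      apply NatTrans.ext
      funext Y
      show ((N : ℕ) • 𝟙 B') ▷ Y = ((N : ℕ) • 𝟙 ((tensoringLeft C).obj B')).app Y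
      rw [NatTrans.app_nsmul, TorAux.nsmul_whiskerRight, MonoidalCategory.id_whiskerRight]
      rfl
    have htor : ((Tor C 1).map (ρ' ≫ ι')).app M
        = (N : ℕ) • 𝟙 (((Tor C 1).obj B').obj M) := by
      show (NatTrans.leftDerived ((tensoringLeft C).map (ρ' ≫ ι')) 1).app M = _
      rw [hτ]
      exact TorAux.natTrans_leftDerived_nsmul_id_app ((tensoringLeft C).obj B') N 1 M
    have hNx : (N : ℕ) • x = 0 := by
      have h2 := hsmul
      rw [htor] at h2
      exact h2
    -- division by `N` on `M`
    let q0 : ℚ →ₗ[ℤ] ℚ := (N : ℚ)⁻¹ • LinearMap.id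
    let d₀ : E ⊗[ℤ] ℚ →ₗ[ℤ] E ⊗[ℤ] ℚ := LinearMap.lTensor E q0
    have hd₀ : ∀ z : E ⊗[ℤ] ℚ, (N : ℕ) • d₀ z = z := by
      intro z
      induction z using TensorProduct.induction_on with
      | zero => simp
      | tmul e r =>
          have h1 : d₀ (e ⊗ₜ[ℤ] r) = e ⊗ₜ[ℤ] ((N : ℚ)⁻¹ • r) := by
            simp [d₀, q0]
            rfl
          rw [h1]
          calc (N : ℕ) • (e ⊗ₜ[ℤ] ((N : ℚ)⁻¹ • r))
              = (TensorProduct.mk ℤ E ℚ e) ((N : ℕ) • ((N : ℚ)⁻¹ • r)) :=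
                (map_nsmul (TensorProduct.mk ℤ E ℚ e) _ _).symm
            _ = (TensorProduct.mk ℤ E ℚ e) r := by rw [TorAux.nsmul_inv_smul hN]
            _ = e ⊗ₜ[ℤ] r := rfl
      | add u v hu hv => rw [map_add, smul_add, hu, hv]
    have hd₀A : ∀ (a : A) (z : E ⊗[ℤ] ℚ), d₀ (a • z) = a • d₀ z := by
      intro a z
      induction z using TensorProduct.induction_on with
      | zero => simp
      | tmul e r =>
          rw [TensorProduct.smul_tmul']
          simp [d₀, q0, TensorProduct.smul_tmul']
          erw [LinearMap.lTensor_tmul, LinearMap.lTensor_tmul]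
          rw [TensorProduct.smul_tmul']
      | add u v hu hv => rw [smul_add, map_add, hu, hv, map_add, smul_add]
    let dA : (E ⊗[ℤ] ℚ) →ₗ[A] (E ⊗[ℤ] ℚ) :=
      { toFun := d₀
        map_add' := fun u v => map_add d₀ u v
        map_smul' := fun a z => hd₀A a z }
    let d' : M ⟶ M := ModuleCat.ofHom dA
    have hiso : IsIso ((N : ℕ) • 𝟙 M) := by
      refine ⟨d', ?_, ?_⟩
      · refine ModuleCat.hom_ext (LinearMap.ext fun z => ?_)
        show d₀ ((N : ℕ) • z) = z
        rw [map_nsmul]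
        exact hd₀ z
      · refine ModuleCat.hom_ext (LinearMap.ext fun z => ?_)
        show (N : ℕ) • d₀ z = z
        exact hd₀ z
    haveI := hiso
    have hmapN : (((tensoringLeft C).obj B').leftDerived 1).map ((N : ℕ) • 𝟙 M)
        = (N : ℕ) • 𝟙 ((((tensoringLeft C).obj B').leftDerived 1).obj M) :=
      TorAux.leftDerived_map_nsmul_id ((tensoringLeft C).obj B') N 1 M
    have hIso2 : IsIso ((N : ℕ) • 𝟙 ((((tensoringLeft C).obj B').leftDerived 1).obj M)) := by
      rw [← hmapN]
      infer_instance
    have hIso3 : IsIso ((N : ℕ) • 𝟙 (((Tor C 1).obj B').obj M)) := hIso2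
    have hinj : Function.Injective
        (((N : ℕ) • 𝟙 (((Tor C 1).obj B').obj M)) :
          (((Tor C 1).obj B').obj M) ⟶ (((Tor C 1).obj B').obj M)) := by
      rw [← ModuleCat.mono_iff_injective]
      infer_instance
    have : ((N : ℕ) • 𝟙 (((Tor C 1).obj B').obj M)) x
        = ((N : ℕ) • 𝟙 (((Tor C 1).obj B').obj M)) 0 := by
      show (N : ℕ) • x = (N : ℕ) • (0 : (((Tor C 1).obj B').obj M))
      rw [hNx, smul_zero]
    exact hinj this
  · intro E' E _ _ _ _ _ _ _ _ f hf
    have key : ∀ z : B ⊗[A] E', LinearMap.lTensor B f z = 0 → z = 0 := by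
      intro z hz
      set y : A ⊗[A] E' := LinearMap.rTensor E' ρ z with hy
      have h1 : LinearMap.lTensor A f y = 0 := by
        have hc : (LinearMap.lTensor A f).comp (LinearMap.rTensor E' ρ)
            = (LinearMap.rTensor E ρ).comp (LinearMap.lTensor B f) := by
          rw [LinearMap.lTensor_comp_rTensor, LinearMap.rTensor_comp_lTensor]
        have h2 := LinearMap.congr_fun hc z
        simp only [LinearMap.comp_apply] at h2
        rw [hy, h2, hz, map_zero]
      have hinjA : Function.Injective (LinearMap.lTensor A f) := by
        have hcomm : (TensorProduct.lid A E).toLinearMap.comp (LinearMap.lTensor A f)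
            = f.comp (TensorProduct.lid A E').toLinearMap :=
          TensorProduct.ext' (fun a e => by simp)
        intro u v huv
        have e1 := LinearMap.congr_fun hcomm u
        have e2 := LinearMap.congr_fun hcomm v
        simp only [LinearMap.comp_apply, LinearEquiv.coe_coe] at e1 e2
        have h3 : f ((TensorProduct.lid A E') u) = f ((TensorProduct.lid A E') v) := by
          rw [← e1, ← e2, huv]
        exact (TensorProduct.lid A E').injective (hf h3)
      have hy0 : y = 0 := hinjA (by rw [h1, map_zero])
      have h3 : ∀ w : B ⊗[A] E',
          LinearMap.rTensor E' ((Algebra.linearMap A B).comp ρ) w = (N : ℕ) • w := by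
        intro w
        induction w using TensorProduct.induction_on with
        | zero => simp
        | tmul b e =>
            rw [LinearMap.rTensor_tmul]
            have hb : ((Algebra.linearMap A B).comp ρ) b = (N : ℕ) • b := by
              simp only [LinearMap.comp_apply, Algebra.linearMap_apply]
              exact hιρ b
            rw [hb]
            calc ((N : ℕ) • b) ⊗ₜ[A] e
                = ((TensorProduct.mk A B E').flip e) ((N : ℕ) • b) := rfl
              _ = (N : ℕ) • (((TensorProduct.mk A B E').flip e) b) :=
                  map_nsmul ((TensorProduct.mk A B E').flip e) _ _
              _ = (N : ℕ) • (b ⊗ₜ[A] e) := rfl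
        | add u v hu hv => rw [map_add, smul_add, hu, hv]
      have hNz : (N : ℕ) • z = 0 := by
        calc (N : ℕ) • z
            = LinearMap.rTensor E' ((Algebra.linearMap A B).comp ρ) z := (h3 z).symm
          _ = LinearMap.rTensor E' (Algebra.linearMap A B) y := by
              rw [LinearMap.rTensor_comp, LinearMap.comp_apply]
          _ = 0 := by rw [hy0, map_zero]
      let dE : E' →ₗ[A] E' :=
        { toFun := fun e => (N : ℚ)⁻¹ • e
          map_add' := fun u v => smul_add _ u v
          map_smul' := fun a e => smul_comm ((N : ℚ)⁻¹) a e }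
      have h5 : ∀ w : B ⊗[A] E', (N : ℕ) • LinearMap.lTensor B dE w = w := by
        intro w
        induction w using TensorProduct.induction_on with
        | zero => simp
        | tmul b e =>
            rw [LinearMap.lTensor_tmul]
            calc (N : ℕ) • (b ⊗ₜ[A] dE e)
                = (TensorProduct.mk A B E' b) ((N : ℕ) • dE e) :=
                  (map_nsmul (TensorProduct.mk A B E' b) _ _).symm
              _ = b ⊗ₜ[A] e := by
                  show b ⊗ₜ[A] ((N : ℕ) • ((N : ℚ)⁻¹ • e)) = b ⊗ₜ[A] e
                  rw [TorAux.nsmul_inv_smul hN]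
        | add u v hu hv => rw [map_add, smul_add, hu, hv]
      have h6 : z = LinearMap.lTensor B dE ((N : ℕ) • z) := by
        rw [map_nsmul]
        exact (h5 z).symm
      rw [hNz, map_zero] at h6
      exact h6
    intro u v huv
    have h7 : LinearMap.lTensor B f (u - v) = 0 := by rw [map_sub, huv, sub_self]
    exact sub_eq_zero.mp (key _ h7)
end

section
/- Let A be a commutative ring, π ∈ A, and n ≥ 1. Then the A-algebra B := A[x,t]/(xⁿ − π t) is free as an A-module with basis the images of the monomials x^a t^b for 0 ≤ a < n and b ≥ 0. In particular B is a flat A-module. -/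
open MvPolynomial

noncomputable def myEquiv (A : Type*) [CommRing A] :
    MvPolynomial (Fin 2) A ≃ₐ[A] Polynomial (Polynomial A) :=
  (MvPolynomial.finSuccEquiv A 1).trans <|
    Polynomial.mapAlgEquiv <|
      (MvPolynomial.finSuccEquiv A 0).trans <|
        Polynomial.mapAlgEquiv (MvPolynomial.isEmptyAlgEquiv A (Fin 0))

@[simp] lemma myEquiv_X0 (A : Type*) [CommRing A] :
    myEquiv A (X 0) = Polynomial.X := by
  simp [myEquiv, MvPolynomial.finSuccEquiv_X_zero]

@[simp] lemma myEquiv_X1 (A : Type*) [CommRing A] :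
    myEquiv A (X 1) = Polynomial.C Polynomial.X := by
  have h : (1 : Fin 2) = Fin.succ 0 := rfl
  rw [myEquiv, AlgEquiv.trans_apply, h, MvPolynomial.finSuccEquiv_X_succ]
  simp [MvPolynomial.finSuccEquiv_X_zero]

/-- For a commutative ring `A`, `π ∈ A` and `n ≥ 1`, the `A`-algebra
`B = A[x,t]/(xⁿ - π t)` is free as an `A`-module, with basis the images of the
monomials `x^a t^b` for `0 ≤ a < n`, `b ≥ 0`; in particular `B` is flat over `A`. -/
theorem quotient_by_pow_sub_pi_mul_free_and_flat
    (A : Type*) [CommRing A] (π : A) (n : ℕ) (hn : 1 ≤ n)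
    (I : Ideal (MvPolynomial (Fin 2) A))
    (hI : I = Ideal.span {(X 0 : MvPolynomial (Fin 2) A) ^ n - C π * X 1}) :
    (∃ b : Module.Basis (Fin n × ℕ) A (MvPolynomial (Fin 2) A ⧸ I),
      ∀ p : Fin n × ℕ,
        b p = Ideal.Quotient.mk I ((X 0 : MvPolynomial (Fin 2) A) ^ (p.1 : ℕ) * X 1 ^ p.2)) ∧
    Module.Flat A (MvPolynomial (Fin 2) A ⧸ I) := by
  suffices h : ∃ b : Module.Basis (Fin n × ℕ) A (MvPolynomial (Fin 2) A ⧸ I),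
      ∀ p : Fin n × ℕ,
        b p = Ideal.Quotient.mk I ((X 0 : MvPolynomial (Fin 2) A) ^ (p.1 : ℕ) * X 1 ^ p.2) by
    obtain ⟨b, hb⟩ := h
    refine ⟨⟨b, hb⟩, ?_⟩
    haveI := Module.Free.of_basis b
    exact Module.Flat.of_free
  by_cases hA : Nontrivial A
  · set f : Polynomial (Polynomial A) :=
      Polynomial.X ^ n - Polynomial.C (Polynomial.C π * Polynomial.X) with hf
    have hm : f.Monic := Polynomial.monic_X_pow_sub_C _ (by omega)
    have hdim : f.natDegree = n := Polynomial.natDegree_X_pow_sub_C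
    have hC : myEquiv A (C π) = Polynomial.C (Polynomial.C π) := by
      have := (myEquiv A).commutes π
      simpa [MvPolynomial.algebraMap_eq, Polynomial.algebraMap_apply] using this
    have hmap : Ideal.span {f} =
        I.map (myEquiv A : MvPolynomial (Fin 2) A →+* Polynomial (Polynomial A)) := by
      rw [hI, Ideal.map_span, Set.image_singleton]
      congr 1
      simp [map_sub, map_pow, map_mul, hC, hf]
    let eq1 : (MvPolynomial (Fin 2) A ⧸ I) ≃ₐ[A] AdjoinRoot f :=
      Ideal.quotientEquivAlg I (Ideal.span {f}) (myEquiv A) hmap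
    let pb := AdjoinRoot.powerBasis' hm
    let eidx : ℕ × Fin f.natDegree ≃ Fin n × ℕ :=
      (Equiv.prodComm _ _).trans (Equiv.prodCongr (finCongr hdim) (Equiv.refl ℕ))
    let c : Module.Basis (Fin n × ℕ) A (AdjoinRoot f) :=
      ((Polynomial.basisMonomials A).smulTower pb.basis).reindex eidx
    refine ⟨c.map eq1.symm.toLinearEquiv, ?_⟩
    rintro ⟨a, b⟩
    have hc : c (a, b) = AdjoinRoot.mk f ((Polynomial.C Polynomial.X) ^ b *
        Polynomial.X ^ (a : ℕ)) := by
      show (((Polynomial.basisMonomials A).smulTower pb.basis).reindex eidx) (a, b) = _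
      erw [Module.Basis.reindex_apply]
      show ((Polynomial.basisMonomials A).smulTower pb.basis) (b, Fin.cast hdim.symm a) = _
      rw [Module.Basis.smulTower_apply]
      rw [show pb.basis = (AdjoinRoot.powerBasis' hm).basis from rfl]
      rw [PowerBasis.basis_eq_pow]
      rw [Algebra.smul_def]
      rw [show (AdjoinRoot.powerBasis' hm).gen = AdjoinRoot.root f from rfl]
      rw [Polynomial.coe_basisMonomials]
      simp only [AdjoinRoot.algebraMap_eq]
      erw [show ((Fin.cast hdim.symm a : Fin f.natDegree) : ℕ) = (a : ℕ) from rfl]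
      rw [← Polynomial.X_pow_eq_monomial]
      rw [AdjoinRoot.root, AdjoinRoot.of]
      simp only [RingHom.comp_apply, map_pow, map_mul]
    have hsymm0 : (myEquiv A).symm Polynomial.X = X 0 := by
      rw [AlgEquiv.symm_apply_eq, myEquiv_X0]
    have hsymm1 : (myEquiv A).symm (Polynomial.C Polynomial.X) = X 1 := by
      rw [AlgEquiv.symm_apply_eq, myEquiv_X1]
    rw [Module.Basis.map_apply, hc]
    show eq1.symm (Ideal.Quotient.mk (Ideal.span {f}) _) = _
    rw [show ∀ q, eq1.symm (Ideal.Quotient.mk (Ideal.span {f}) q)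
        = Ideal.Quotient.mk I ((myEquiv A).symm q) from fun q => rfl]
    rw [map_mul, map_pow, map_pow, hsymm0, hsymm1, mul_comm]
  · haveI : Subsingleton A := not_nontrivial_iff_subsingleton.mp hA
    haveI h1 : Subsingleton (MvPolynomial (Fin 2) A ⧸ I) := Module.subsingleton A _
    haveI h2 : Subsingleton ((Fin n × ℕ) →₀ A) := Module.subsingleton A _
    refine ⟨Module.Basis.ofRepr
      { toFun := fun _ => 0, invFun := fun _ => 0,
        map_add' := by intros; simp, map_smul' := by intros; simp,
        left_inv := fun x => Subsingleton.elim _ _,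
        right_inv := fun x => Subsingleton.elim _ _ }, fun p => Subsingleton.elim _ _⟩
end

section
/- Let φ : B → B' be an étale ring homomorphism and let J ⊆ B be a nilpotent ideal such that the induced map B/J → B'/JB' is an isomorphism. Then φ is an isomorphism. -/
/-!
Since `J` and `JB'` are nilpotent, formal smoothness lifts the composite
`B' → B'/JB' ≃ B/J` to a `B`-algebra map `g : B' → B`, which is automatically a left inverse
of `φ`. The endomorphism `φ ∘ g` of `B'` agrees with the identity modulo `JB'`, so formal
unramifiedness forces `φ ∘ g = id`.
-/

universe u

section

variable {B B' : Type*} [CommRing B] [CommRing B'] [Algebra B B']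

theorem Algebra.bijective_algebraMap_of_algHom_comp_eq_id (g : B' →ₐ[B] B)
    (hg : (Algebra.ofId B B').comp g = AlgHom.id B B') : Function.Bijective (algebraMap B B') :=
  (AlgEquiv.ofAlgHom (Algebra.ofId B B') g hg (Subsingleton.elim _ _)).bijective

theorem Algebra.FormallyEtale.bijective_algebraMap_of_quotientEquiv [Algebra.FormallyEtale B B']
    {J : Ideal B} (hJ : IsNilpotent J) (e : (B ⧸ J) ≃ₐ[B] (B' ⧸ J.map (algebraMap B B'))) :
    Function.Bijective (algebraMap B B') := by
  let J' := J.map (algebraMap B B')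
  have hJ' : IsNilpotent J' := hJ.map (Ideal.mapHom (algebraMap B B'))
  let g : B' →ₐ[B] B :=
    Algebra.FormallySmooth.lift J hJ (e.symm.toAlgHom.comp (Ideal.Quotient.mkₐ B J'))
  refine Algebra.bijective_algebraMap_of_algHom_comp_eq_id g
    (Algebra.FormallyUnramified.ext J' hJ' fun x ↦ ?_)
  have he : ∀ b : B, e (Ideal.Quotient.mk J b) = Ideal.Quotient.mk J' (algebraMap B B' b) :=
    fun b ↦ by simpa using e.commutes b
  calc Ideal.Quotient.mk J' (algebraMap B B' (g x))
      = e (Ideal.Quotient.mk J (g x)) := (he _).symm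
    _ = Ideal.Quotient.mk J' x := by simp [g]

end

/-- An étale ring map `B → B'` which is an isomorphism modulo a nilpotent ideal `J ⊆ B`
is an isomorphism. -/
theorem bijective_of_etale_of_bijective_mod_nilpotent
    (B B' : Type u) [CommRing B] [CommRing B'] [Algebra B B']
    [Algebra.Etale B B']
    (J : Ideal B) (hJ : ∃ n : ℕ, J ^ n = ⊥)
    (h : Function.Bijective
      (Ideal.quotientMap (J.map (algebraMap B B')) (algebraMap B B') Ideal.le_comap_map)) :
    Function.Bijective (algebraMap B B') :=
  Algebra.FormallyEtale.bijective_algebraMap_of_quotientEquiv hJ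
    (AlgEquiv.ofBijective (Ideal.quotientMapₐ _ (Algebra.ofId B B') Ideal.le_comap_map) h)
end

section
/- Let θ : P → Q be a homomorphism of fine (finitely generated and cancellative) commutative monoids such that θ^gp : P^gp → Q^gp is surjective. Let P^ex := (θ^gp)⁻¹(Q) ⊆ P^gp. Then: (1) P^ex is a finitely generated submonoid of P^gp containing the image of P; (2) (P^ex)^gp = P^gp; (3) the induced homomorphism θ^ex : P^ex → Q is exact, i.e. the preimage of Q under (θ^ex)^gp : P^gp → Q^gp equals P^ex. -/
section Aux

/-- A subgroup of a finitely generated commutative group is finitely generated. -/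
lemma aux_subgroup_fg_of_commGroup_fg {G : Type*} [CommGroup G] [Group.FG G]
    (K : Subgroup G) : K.FG := by
  haveI : AddGroup.FG (Additive G) :=
    AddGroup.fg_iff_mul_fg.mpr (inferInstanceAs (Group.FG G))
  haveI : Module.Finite ℤ (Additive G) := Module.Finite.iff_addGroup_fg.mpr ‹_›
  haveI : IsNoetherian ℤ (Additive G) := inferInstance
  have h1 : (AddSubgroup.toIntSubmodule K.toAddSubgroup).FG := IsNoetherian.noetherian _
  rw [Submodule.fg_iff_addSubgroup_fg, AddSubgroup.toIntSubmodule_toAddSubgroup] at h1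
  exact (Subgroup.fg_iff_add_fg K).mpr h1

end Aux

/-- Exactification of a homomorphism of fine monoids.

We model a fine (finitely generated, cancellative) monoid `P` together with its group
completion `P^gp` as a finitely generated submonoid `P` of a commutative group `G`
which generates `G` as a group (so `G = P^gp`), and similarly `Q ⊆ H` with `H = Q^gp`.
A monoid homomorphism `θ : P → Q` whose groupification is surjective is modeled as a
surjective group homomorphism `θ : G → H` with `θ(P) ⊆ Q`.  Setting
`P^ex := (θ^gp)⁻¹(Q) = θ⁻¹(Q)`, we have:
(1) `P^ex` is a finitely generated submonoid of `P^gp = G` containing (the image of) `P`;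
(2) `(P^ex)^gp = P^gp`, i.e. `P^ex` generates `G` as a group;
(3) the induced homomorphism `θ^ex : P^ex → Q` is exact, i.e. the preimage of `Q`
under `(θ^ex)^gp = θ : G → H` equals `P^ex`. -/
theorem exactification_of_fine_monoid_hom
    {G H : Type*} [CommGroup G] [CommGroup H]
    (P : Submonoid G) (Q : Submonoid H)
    (hPfg : P.FG) (hQfg : Q.FG)
    (hPgen : Subgroup.closure (P : Set G) = ⊤)
    (hQgen : Subgroup.closure (Q : Set H) = ⊤)
    (θ : G →* H) (hθP : P.map θ ≤ Q) (hθsurj : Function.Surjective θ) :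
    (Submonoid.comap θ Q).FG ∧
    P ≤ Submonoid.comap θ Q ∧
    Subgroup.closure ((Submonoid.comap θ Q : Submonoid G) : Set G) = ⊤ ∧
    (∀ g : G, θ g ∈ Q → g ∈ Submonoid.comap θ Q) := by
  -- (easy parts first)
  have hPle : P ≤ Submonoid.comap θ Q := fun x hx =>
    hθP ⟨x, hx, rfl⟩
  have hexact : ∀ g : G, θ g ∈ Q → g ∈ Submonoid.comap θ Q := fun g hg => hg
  -- `G` is a finitely generated group
  obtain ⟨S, hS⟩ := hPfg
  haveI : Group.FG G := by
    refine ⟨⟨S, ?_⟩⟩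
    rw [eq_top_iff, ← hPgen]
    refine Subgroup.closure_le _ |>.mpr ?_
    rw [← hS]
    exact (Submonoid.closure_le).mpr (fun x hx => Subgroup.subset_closure hx)
      |>.trans (le_of_eq rfl)
  -- the kernel of θ is a finitely generated group
  have hKfg : (θ.ker).FG := aux_subgroup_fg_of_commGroup_fg θ.ker
  obtain ⟨KS, hKScl, hKSfin⟩ := (Subgroup.fg_iff θ.ker).mp hKfg
  -- lifts of generators of Q
  obtain ⟨TQ, hTQ⟩ := hQfg
  choose lift hlift using hθsurj
  -- the generating set
  set L : Set G := lift '' (TQ : Set H) with hL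
  set KK : Set G := KS ∪ KS⁻¹ with hKK
  have hKmon : Submonoid.closure KK = (θ.ker).toSubmonoid := by
    rw [hKK, ← Subgroup.closure_toSubmonoid, hKScl]
  -- key: every element of the preimage is in the closure of L ∪ KK
  have key : Submonoid.closure (L ∪ KK) = Submonoid.comap θ Q := by
    apply le_antisymm
    · apply Submonoid.closure_le.mpr
      rintro x (⟨q, hq, rfl⟩ | hx)
      · show θ (lift q) ∈ Q
        rw [hlift]
        rw [← hTQ]
        exact Submonoid.subset_closure hq
      · have : x ∈ (θ.ker).toSubmonoid := by rw [← hKmon]; exact Submonoid.subset_closure hx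
        show θ x ∈ Q
        rw [this]
        exact Q.one_mem
    · intro x hx
      have hx' : θ x ∈ Submonoid.closure (TQ : Set H) := by rw [hTQ]; exact hx
      -- find y in closure L with θ y = θ x
      have : ∀ h ∈ Submonoid.closure (TQ : Set H),
          ∃ y ∈ Submonoid.closure L, θ y = h := by
        intro h hh
        induction hh using Submonoid.closure_induction with
        | mem q hq => exact ⟨lift q, Submonoid.subset_closure ⟨q, hq, rfl⟩, hlift q⟩
        | one => exact ⟨1, Submonoid.one_mem _, map_one θ⟩
        | mul a b _ _ iha ihb =>
          obtain ⟨ya, hya, hya'⟩ := iha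
          obtain ⟨yb, hyb, hyb'⟩ := ihb
          exact ⟨ya * yb, Submonoid.mul_mem _ hya hyb, by rw [map_mul, hya', hyb']⟩
      obtain ⟨y, hy, hy'⟩ := this (θ x) hx'
      have hxy : x * y⁻¹ ∈ Submonoid.closure KK := by
        rw [hKmon]
        show θ (x * y⁻¹) = 1
        rw [map_mul, map_inv, hy', mul_inv_cancel]
      have h1 : x * y⁻¹ ∈ Submonoid.closure (L ∪ KK) :=
        Submonoid.closure_mono Set.subset_union_right hxy
      have h2 : y ∈ Submonoid.closure (L ∪ KK) :=
        Submonoid.closure_mono Set.subset_union_left hy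
      have : x = (x * y⁻¹) * y := by group
      rw [this]
      exact Submonoid.mul_mem _ h1 h2
  have hfg : (Submonoid.comap θ Q).FG := by
    rw [Submonoid.fg_iff]
    exact ⟨L ∪ KK, key, Set.Finite.union ((TQ : Set H).toFinite.image lift)
      (Set.Finite.union hKSfin hKSfin.inv)⟩
  refine ⟨hfg, hPle, ?_, hexact⟩
  rw [eq_top_iff, ← hPgen]
  exact Subgroup.closure_mono (fun x hx => hPle hx)
end

section
/- Let θ : P → Q be a homomorphism of fine commutative monoids with θ^gp surjective, and let P^ex = (θ^gp)⁻¹(Q) as above. Let R be an integral (cancellative) commutative monoid, g : R → Q an exact homomorphism, and h : P → R a homomorphism with g ∘ h = θ. Then there exists a unique homomorphism h^ex : P^ex → R extending h (i.e. h^ex restricted to P equals h) and satisfying g ∘ h^ex = θ^ex. -/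
/-- In a commutative group, every element of the subgroup closure of a submonoid is a
fraction of two elements of the submonoid. -/
lemma exists_frac_of_mem_closure {G : Type*} [CommGroup G] (P : Submonoid G) {x : G}
    (hx : x ∈ Subgroup.closure (P : Set G)) : ∃ a ∈ P, ∃ b ∈ P, x = a * b⁻¹ := by
  induction hx using Subgroup.closure_induction with
  | mem y hy => exact ⟨y, hy, 1, one_mem _, by simp⟩
  | one => exact ⟨1, one_mem _, 1, one_mem _, by simp⟩
  | mul y z _ _ hy hz =>
    obtain ⟨a, ha, b, hb, rfl⟩ := hy
    obtain ⟨c, hc, d, hd, rfl⟩ := hz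
    exact ⟨a * c, mul_mem ha hc, b * d, mul_mem hb hd, by rw [mul_inv]; simp [mul_assoc, mul_comm, mul_left_comm]⟩
  | inv y _ hy =>
    obtain ⟨a, ha, b, hb, rfl⟩ := hy
    exact ⟨b, hb, a, ha, by group⟩

/-- Universal property of the exactification.

As in the exactification setting, a fine monoid `P` with group completion `G = P^gp` is a
finitely generated submonoid `P ⊆ G` generating `G` as a group, `Q ⊆ H` likewise, and
`θ : G → H` is a surjective group homomorphism with `θ(P) ⊆ Q`, with
`P^ex := θ⁻¹(Q) ⊆ G`.  An integral monoid `R` with an exact homomorphism `g : R → Q`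
is modeled as a submonoid `R` of a commutative group `K` generating `K` as a group,
together with a group homomorphism `g : K → H` with `g(R) ⊆ Q` which is exact, i.e.
`g⁻¹(Q) = R`.  A homomorphism `h : P → R` with `g ∘ h = θ` is modeled by its (unique)
groupification `φ : G → K` with `φ(P) ⊆ R` and `g ∘ φ = θ` on `P`.  Then there is a
unique monoid homomorphism `h^ex : P^ex → R` extending `h` (i.e. agreeing with `φ` on
`P`) and satisfying `g ∘ h^ex = θ^ex`. -/
theorem exactification_universal_property
    {G H K : Type*} [CommGroup G] [CommGroup H] [CommGroup K]
    (P : Submonoid G) (Q : Submonoid H) (R : Submonoid K)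
    (hPfg : P.FG) (hQfg : Q.FG)
    (hPgen : Subgroup.closure (P : Set G) = ⊤)
    (hQgen : Subgroup.closure (Q : Set H) = ⊤)
    (hRgen : Subgroup.closure (R : Set K) = ⊤)
    (θ : G →* H) (hθsurj : Function.Surjective θ)
    (hPle : P ≤ Submonoid.comap θ Q)
    (g : K →* H) (hgR : R.map g ≤ Q)
    (hgexact : ∀ x : K, g x ∈ Q → x ∈ R)
    (φ : G →* K) (hφP : P.map φ ≤ R)
    (hcomm : ∀ p ∈ P, g (φ p) = θ p) :
    ∃! ψ : (Submonoid.comap θ Q) →* R,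
      (∀ (p : G) (hp : p ∈ P), ((ψ ⟨p, hPle hp⟩ : R) : K) = φ p) ∧
      (∀ x : Submonoid.comap θ Q, g ((ψ x : R) : K) = θ (x : G)) := by
  -- g ∘ φ = θ since they agree on P which generates G as a group
  have hgφ : ∀ x : G, g (φ x) = θ x := by
    have : g.comp φ = θ :=
      MonoidHom.eq_of_eqOn_dense hPgen fun p hp => hcomm p hp
    intro x; exact DFunLike.congr_fun this x
  -- existence
  have hmem : ∀ x : Submonoid.comap θ Q, φ (x : G) ∈ R := fun x =>
    hgexact _ ((hgφ x).symm ▸ x.2)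
  refine ⟨{ toFun := fun x => ⟨φ x, hmem x⟩,
            map_one' := by ext; simp,
            map_mul' := fun x y => by ext; simp }, ⟨?_, ?_⟩, ?_⟩
  · intro p hp; rfl
  · intro x; exact hgφ x
  · intro ψ ⟨hψP, hψg⟩
    ext x
    -- x : P^ex; write x = a * b⁻¹ with a b ∈ P
    obtain ⟨a, ha, b, hb, hab⟩ :=
      exists_frac_of_mem_closure P (hPgen ▸ Subgroup.mem_top (x : G))
    -- then x * b = a, both in P^ex
    have hxb : (x : G) * b = a := by rw [hab]; group
    have hbmem : b ∈ Submonoid.comap θ Q := hPle hb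
    have : ((ψ x : R) : K) * φ b = φ a := by
      have h1 : ψ (x * ⟨b, hbmem⟩) = ψ ⟨a, hPle ha⟩ := by
        congr 1; ext; exact hxb
      have h2 := congrArg (fun r : R => (r : K)) h1
      simpa [hψP b hb, hψP a ha] using h2
    have : ((ψ x : R) : K) = φ a * (φ b)⁻¹ := by
      rw [← this]; group
    rw [this]
    show _ = φ (x : G)
    rw [hab, map_mul, map_inv]
end

section
/- Let A be a commutative ring, r ≥ 1, R = A[x₁,…,x_r] the polynomial ring, and I = (x₁⋯x_r) the principal ideal generated by the product of the variables. For each subset S ⊆ {1,…,r} let R_S := R/(x_i : i ∈ S). Then the complex 0 → I → R → ⊕_{|S|=1} R_S → ⊕_{|S|=2} R_S → ⋯ → R_{{1,…,r}} → 0, whose maps are the alternating sums of the natural surjections R_S → R_{S∪{j}} (with sign (−1)^{position of j in S∪{j}}), is an exact sequence of R-modules. -/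
open MvPolynomial

variable (A : Type*) [CommRing A] (r : ℕ)

/-- The ideal of `A[x₁,…,x_r]` generated by the variables `x_i`, `i ∈ S`. -/
noncomputable def sncdIdeal (S : Finset (Fin r)) : Ideal (MvPolynomial (Fin r) A) :=
  Ideal.span (X '' (S : Set (Fin r)))

theorem mem_sncdIdeal_iff {S : Finset (Fin r)} {x : MvPolynomial (Fin r) A} :
    x ∈ sncdIdeal A r S ↔ ∀ m : Fin r →₀ ℕ, (∀ i ∈ S, m i = 0) → coeff m x = 0 := by
  constructor
  · intro hx
    induction hx using Submodule.span_induction with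
    | mem y hy =>
      intro m hm
      obtain ⟨i, hi, rfl⟩ := hy
      rw [X, coeff_monomial, if_neg]
      intro he
      have : m i = 0 := hm i (by simpa using hi)
      rw [← he] at this
      simp at this
    | zero => intro m hm; simp
    | add y z _ _ hy hz => intro m hm; rw [coeff_add, hy m hm, hz m hm, add_zero]
    | smul a y _ hy =>
      intro m hm
      rw [smul_eq_mul, coeff_mul]
      refine Finset.sum_eq_zero fun p hp => ?_
      have hple : p.2 ≤ m := by
        rw [Finset.HasAntidiagonal.mem_antidiagonal] at hp
        exact hp ▸ le_add_self
      have : coeff p.2 y = 0 := hy _ fun i hi => Nat.eq_zero_of_le_zero ((hm i hi) ▸ hple i)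
      rw [this, mul_zero]
  · intro h
    rw [as_sum x]
    refine Submodule.sum_mem _ fun m hm => ?_
    by_cases hgood : ∀ i ∈ S, m i = 0
    · rw [h m hgood, monomial_zero]; exact Submodule.zero_mem _
    · push_neg at hgood
      obtain ⟨i, hiS, hmi⟩ := hgood
      have hle : Finsupp.single i 1 ≤ m := by
        rw [Finsupp.single_le_iff]
        omega
      have : monomial m (coeff m x) = X i * monomial (m - Finsupp.single i 1) (coeff m x) := by
        rw [X, monomial_mul, one_mul, add_tsub_cancel_of_le hle]
      rw [this]
      exact Ideal.mul_mem_right _ _ (Ideal.subset_span ⟨i, by simpa using hiS, rfl⟩)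

noncomputable def qcoeff {S : Finset (Fin r)} (m : Fin r →₀ ℕ)
    (q : MvPolynomial (Fin r) A ⧸ sncdIdeal A r S) : A :=
  coeff m q.out

variable {A r}

theorem qcoeff_mk {S : Finset (Fin r)} {m : Fin r →₀ ℕ} (h : ∀ i ∈ S, m i = 0)
    (x : MvPolynomial (Fin r) A) :
    qcoeff A r m (Submodule.Quotient.mk x : _ ⧸ sncdIdeal A r S) = coeff m x := by
  have hout : Submodule.Quotient.mk
      (Quotient.out (Submodule.Quotient.mk x : _ ⧸ sncdIdeal A r S)) =
      (Submodule.Quotient.mk x : _ ⧸ sncdIdeal A r S) := Quotient.out_eq' _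
  have hmem := (Submodule.Quotient.eq _).1 hout
  have := (mem_sncdIdeal_iff A r).1 hmem m h
  rw [coeff_sub, sub_eq_zero] at this
  exact this

theorem qcoeff_zero {S : Finset (Fin r)} {m : Fin r →₀ ℕ} (h : ∀ i ∈ S, m i = 0) :
    qcoeff A r m (0 : _ ⧸ sncdIdeal A r S) = 0 := by
  rw [← Submodule.Quotient.mk_zero, qcoeff_mk h, coeff_zero]

theorem qcoeff_add {S : Finset (Fin r)} {m : Fin r →₀ ℕ} (h : ∀ i ∈ S, m i = 0)
    (q q' : MvPolynomial (Fin r) A ⧸ sncdIdeal A r S) :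
    qcoeff A r m (q + q') = qcoeff A r m q + qcoeff A r m q' := by
  obtain ⟨x, rfl⟩ := Submodule.Quotient.mk_surjective _ q
  obtain ⟨y, rfl⟩ := Submodule.Quotient.mk_surjective _ q'
  rw [← Submodule.Quotient.mk_add, qcoeff_mk h, qcoeff_mk h, qcoeff_mk h, coeff_add]

theorem qcoeff_neg {S : Finset (Fin r)} {m : Fin r →₀ ℕ} (h : ∀ i ∈ S, m i = 0)
    (q : MvPolynomial (Fin r) A ⧸ sncdIdeal A r S) :
    qcoeff A r m (-q) = - qcoeff A r m q := by
  obtain ⟨x, rfl⟩ := Submodule.Quotient.mk_surjective _ q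
  rw [← Submodule.Quotient.mk_neg, qcoeff_mk h, qcoeff_mk h, coeff_neg]

theorem qcoeff_sum {S : Finset (Fin r)} {m : Fin r →₀ ℕ} (h : ∀ i ∈ S, m i = 0)
    {ι : Type*} (s : Finset ι) (f : ι → MvPolynomial (Fin r) A ⧸ sncdIdeal A r S) :
    qcoeff A r m (∑ i ∈ s, f i) = ∑ i ∈ s, qcoeff A r m (f i) := by
  classical
  induction s using Finset.cons_induction with
  | empty => simpa using qcoeff_zero h
  | cons a s ha ih => rw [Finset.sum_cons, Finset.sum_cons, qcoeff_add h, ih]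

theorem qcoeff_neg_one_pow_smul {S : Finset (Fin r)} {m : Fin r →₀ ℕ} (h : ∀ i ∈ S, m i = 0)
    (n : ℕ) (q : MvPolynomial (Fin r) A ⧸ sncdIdeal A r S) :
    qcoeff A r m (((-1 : ℤ) ^ n) • q) = ((-1 : ℤ) ^ n) • qcoeff A r m q := by
  rcases Nat.even_or_odd n with he | ho
  · rw [he.neg_one_pow, one_smul, one_smul]
  · rw [ho.neg_one_pow, neg_smul, neg_smul, one_smul, one_smul, qcoeff_neg h]

theorem qcoeff_mapQ {S S' : Finset (Fin r)} {m : Fin r →₀ ℕ}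
    (hS : ∀ i ∈ S, m i = 0) (hS' : ∀ i ∈ S', m i = 0)
    (hle : sncdIdeal A r S ≤ Submodule.comap LinearMap.id (sncdIdeal A r S'))
    (q : MvPolynomial (Fin r) A ⧸ sncdIdeal A r S) :
    qcoeff A r m (Submodule.mapQ (sncdIdeal A r S) (sncdIdeal A r S') LinearMap.id hle q) =
      qcoeff A r m q := by
  obtain ⟨x, rfl⟩ := Submodule.Quotient.mk_surjective _ q
  rw [Submodule.mapQ_apply, LinearMap.id_apply, qcoeff_mk hS', qcoeff_mk hS]

theorem qcoeff_inj {S : Finset (Fin r)} {q q' : MvPolynomial (Fin r) A ⧸ sncdIdeal A r S}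
    (h : ∀ m : Fin r →₀ ℕ, (∀ i ∈ S, m i = 0) → qcoeff A r m q = qcoeff A r m q') : q = q' := by
  obtain ⟨x, rfl⟩ := Submodule.Quotient.mk_surjective _ q
  obtain ⟨y, rfl⟩ := Submodule.Quotient.mk_surjective _ q'
  rw [Submodule.Quotient.eq]
  rw [mem_sncdIdeal_iff]
  intro m hm
  rw [coeff_sub, sub_eq_zero]
  have := h m hm
  rwa [qcoeff_mk hm, qcoeff_mk hm] at this

variable (A r)

set_option maxHeartbeats 1000000 in
/-- The Čech-type differential `⊕_{|S|=k} R_S → ⊕_{|S|=k+1} R_S`, whose component at `S'`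
is the alternating sum over `j ∈ S'` of the natural surjections `R_{S'∖{j}} → R_{S'}`,
with sign `(−1)^{position of j in S'}`. -/
noncomputable def cechMap (k : ℕ) :
    ((S : {S : Finset (Fin r) // S.card = k}) →
        (MvPolynomial (Fin r) A ⧸ sncdIdeal A r S.1)) →ₗ[MvPolynomial (Fin r) A]
    ((S : {S : Finset (Fin r) // S.card = k + 1}) →
        (MvPolynomial (Fin r) A ⧸ sncdIdeal A r S.1)) :=
  LinearMap.pi fun S' =>
    ∑ j ∈ S'.1.attach,
      ((-1 : ℤ) ^ ((S'.1.filter fun i => i < j.1).card)) •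
        ((Submodule.mapQ (sncdIdeal A r (S'.1.erase j.1)) (sncdIdeal A r S'.1) LinearMap.id
            (fun x hx =>
              Ideal.span_mono
                (Set.image_mono (Finset.coe_subset.mpr (Finset.erase_subset _ _))) hx)) ∘ₗ
          LinearMap.proj
            (⟨S'.1.erase j.1, by simp [Finset.card_erase_of_mem j.2, S'.2]⟩ :
              {S : Finset (Fin r) // S.card = k}))

/-- The map `R → ⊕_{|S|=1} R_S`, `f ↦ (f mod (x_i))_i`. -/
noncomputable def cechZero :
    MvPolynomial (Fin r) A →ₗ[MvPolynomial (Fin r) A]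
    ((S : {S : Finset (Fin r) // S.card = 1}) →
        (MvPolynomial (Fin r) A ⧸ sncdIdeal A r S.1)) :=
  LinearMap.pi fun S => (sncdIdeal A r S.1).mkQ

variable {A r}

set_option maxHeartbeats 1000000 in
theorem qcoeff_cechMap {k : ℕ}
    (F : (S : {S : Finset (Fin r) // S.card = k}) →
      (MvPolynomial (Fin r) A ⧸ sncdIdeal A r S.1))
    (S' : {S : Finset (Fin r) // S.card = k + 1}) {m : Fin r →₀ ℕ}
    (hm : ∀ i ∈ S'.1, m i = 0) :
    qcoeff A r m (cechMap A r k F S') =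
      ∑ j ∈ S'.1.attach,
        ((-1 : ℤ) ^ ((S'.1.filter fun i => i < j.1).card)) •
          qcoeff A r m
            (F ⟨S'.1.erase j.1, by simp [Finset.card_erase_of_mem j.2, S'.2]⟩) := by
  rw [cechMap, LinearMap.pi_apply, LinearMap.sum_apply, qcoeff_sum hm]
  refine Finset.sum_congr rfl fun j _ => ?_
  rw [LinearMap.smul_apply, LinearMap.comp_apply, LinearMap.proj_apply,
    qcoeff_neg_one_pow_smul hm]
  congr 1
  exact qcoeff_mapQ (fun i hi => hm i (Finset.erase_subset _ _ hi)) hm _ _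

/-- `t` is the smallest index where the exponent vector `m` vanishes. -/
def gapMin (m : Fin r →₀ ℕ) (t : Fin r) : Prop := m t = 0 ∧ ∀ s < t, m s ≠ 0

instance (m : Fin r →₀ ℕ) : DecidablePred (gapMin m) := fun _ => by
  unfold gapMin; infer_instance

theorem gapMin_unique {m : Fin r →₀ ℕ} {a b : Fin r} (ha : gapMin m a) (hb : gapMin m b) :
    a = b := by
  rcases lt_trichotomy a b with h | h | h
  · exact absurd ha.1 (hb.2 a h)
  · exact h
  · exact absurd hb.1 (ha.2 b h)

theorem gapMin_exists {m : Fin r →₀ ℕ} {j : Fin r} (hj : m j = 0) :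
    ∃ t, gapMin m t ∧ ∀ x, m x = 0 → t ≤ x := by
  classical
  have hne : (Finset.univ.filter fun i => m i = 0).Nonempty :=
    ⟨j, by simp [hj]⟩
  refine ⟨Finset.min' _ hne, ⟨?_, ?_⟩, ?_⟩
  · have := Finset.min'_mem _ hne
    simpa using this
  · intro s hs hms
    exact absurd (Finset.min'_le _ s (by simp [hms])) (not_le.2 hs)
  · intro x hx
    exact Finset.min'_le _ x (by simp [hx])

/-- Keep only the monomials of `p` whose least vanishing exponent index is `t`. -/
noncomputable def rho (t : Fin r) (p : MvPolynomial (Fin r) A) : MvPolynomial (Fin r) A :=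
  ∑ m ∈ p.support, if gapMin m t then monomial m (coeff m p) else 0

theorem coeff_rho (t : Fin r) (p : MvPolynomial (Fin r) A) (m : Fin r →₀ ℕ) :
    coeff m (rho t p) = if gapMin m t then coeff m p else 0 := by
  classical
  rw [rho, coeff_sum]
  by_cases hmem : m ∈ p.support
  · rw [Finset.sum_eq_single_of_mem m hmem (fun b _ hbne => by
      split_ifs
      · rw [coeff_monomial, if_neg hbne]
      · rw [coeff_zero])]
    split_ifs
    · rw [coeff_monomial, if_pos rfl]
    · rw [coeff_zero]
  · rw [Finset.sum_eq_zero (fun b hb => by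
      split_ifs
      · rw [coeff_monomial, if_neg (fun (hbm : b = m) => hmem (hbm ▸ hb))]
      · rw [coeff_zero])]
    rw [MvPolynomial.notMem_support_iff.1 hmem, ite_self]

theorem filter_lt_min {s : Finset (Fin r)} {t : Fin r} (h : ∀ x ∈ s, ¬ x < t) :
    (s.filter fun i => i < t) = ∅ :=
  Finset.filter_eq_empty_iff.2 h

theorem filter_lt_insert {s : Finset (Fin r)} {t j : Fin r} (ht : t ∉ s) (htj : t < j) :
    (((insert t s).filter fun i => i < j)).card = ((s.filter fun i => i < j)).card + 1 := by
  rw [Finset.filter_insert, if_pos htj,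
    Finset.card_insert_of_notMem (fun hmem => ht (Finset.mem_of_mem_filter _ hmem))]

theorem filter_lt_erase_of_gt {s : Finset (Fin r)} {i j : Fin r} (hij : i < j) :
    ((s.erase j).filter fun x => x < i) = s.filter fun x => x < i := by
  rw [Finset.filter_erase, Finset.erase_eq_of_notMem]
  intro hmem
  exact absurd (Finset.mem_filter.1 hmem).2 (not_lt.2 hij.le)

theorem filter_lt_erase_of_lt {s : Finset (Fin r)} {i j : Fin r} (hij : i < j) (hi : i ∈ s) :
    (((s.erase i).filter fun x => x < j)).card + 1 = ((s.filter fun x => x < j)).card := by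
  have hmemf : i ∈ s.filter fun x => x < j := Finset.mem_filter.2 ⟨hi, hij⟩
  rw [Finset.filter_erase, Finset.card_erase_of_mem hmemf]
  have hpos : 0 < (s.filter fun x => x < j).card := Finset.card_pos.2 ⟨i, hmemf⟩
  omega

theorem sum_antisymm {M : Type*} [AddCommGroup M] {α : Type*} [DecidableEq α] (s : Finset α)
    (h : α → α → M) (anti : ∀ i ∈ s, ∀ j ∈ s, i ≠ j → h i j = - h j i) :
    ∑ j ∈ s, ∑ i ∈ s.erase j, h j i = 0 := by
  rw [Finset.sum_sigma']
  refine Finset.sum_involution (fun p hp => ⟨p.2, p.1⟩) ?_ ?_ ?_ ?_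
  · intro p hp
    rw [Finset.mem_sigma] at hp
    have h2 := Finset.mem_erase.1 hp.2
    have key := anti p.1 hp.1 p.2 (Finset.mem_of_mem_erase hp.2) (fun he => h2.1 he.symm)
    show h p.1 p.2 + h p.2 p.1 = 0
    rw [key]
    exact neg_add_cancel _
  · intro p hp _
    rw [Finset.mem_sigma] at hp
    have h2 := Finset.mem_erase.1 hp.2
    intro he
    exact h2.1 (congrArg Sigma.fst he)
  · intro p hp
    rw [Finset.mem_sigma] at hp
    have h2 := Finset.mem_erase.1 hp.2
    exact Finset.mem_sigma.2 ⟨h2.2, Finset.mem_erase.2 ⟨fun he => h2.1 he.symm, hp.1⟩⟩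
  · intro p hp
    rfl

theorem cechZero_apply (f : MvPolynomial (Fin r) A) (S : {S : Finset (Fin r) // S.card = 1}) :
    cechZero A r f S = Submodule.Quotient.mk f := rfl

theorem ker_cechZero :
    LinearMap.ker (cechZero A r) =
      Ideal.span {∏ i : Fin r, (X i : MvPolynomial (Fin r) A)} := by
  classical
  ext f
  rw [LinearMap.mem_ker]
  set u : Fin r →₀ ℕ := Finsupp.equivFunOnFinite.symm (fun _ => 1) with hu
  have huval : ∀ i, u i = 1 := fun i => rfl
  have husupp : u.support = Finset.univ := by
    ext i; simp [Finsupp.mem_support_iff, huval]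
  have hprod : (∏ i : Fin r, (X i : MvPolynomial (Fin r) A)) = monomial u 1 := by
    rw [← prod_X_pow_eq_monomial, husupp]
    exact Finset.prod_congr rfl fun i _ => by rw [huval, pow_one]
  constructor
  · intro hf
    have hcoeff : ∀ m ∈ f.support, ∀ i : Fin r, m i ≠ 0 := by
      intro m hm i hmi
      have h0 : cechZero A r f ⟨{i}, Finset.card_singleton i⟩ = 0 := by rw [hf]; rfl
      rw [cechZero_apply, Submodule.Quotient.mk_eq_zero, mem_sncdIdeal_iff] at h0
      exact (MvPolynomial.mem_support_iff.1 hm)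
        (h0 m (by intro x hx; rw [Finset.mem_singleton] at hx; rw [hx]; exact hmi))
    rw [hprod, Ideal.mem_span_singleton]
    refine ⟨∑ m ∈ f.support, monomial (m - u) (coeff m f), ?_⟩
    rw [Finset.mul_sum]
    conv_lhs => rw [as_sum f]
    refine Finset.sum_congr rfl fun m hm => ?_
    have hle : u ≤ m := by
      rw [Finsupp.le_def]
      intro i
      rw [huval]
      have := hcoeff m hm i
      omega
    rw [monomial_mul, one_mul, add_tsub_cancel_of_le hle]
  · intro hf
    funext S
    rw [cechZero_apply, Pi.zero_apply, Submodule.Quotient.mk_eq_zero]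
    obtain ⟨i, hi⟩ : S.1.Nonempty := Finset.card_pos.1 (by rw [S.2]; omega)
    have hsub : Ideal.span {∏ i : Fin r, (X i : MvPolynomial (Fin r) A)} ≤ sncdIdeal A r S.1 := by
      rw [Ideal.span_le, Set.singleton_subset_iff]
      rw [← Finset.mul_prod_erase Finset.univ X (Finset.mem_univ i)]
      exact Ideal.mul_mem_right _ _ (Ideal.subset_span ⟨i, by simpa using hi, rfl⟩)
    exact hsub hf

theorem sign_sum_two {s : Finset (Fin r)} (hs : s.card = 2) :
    ∑ j ∈ s, ((-1 : ℤ) ^ ((s.filter fun x => x < j).card)) = 0 := by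
  classical
  obtain ⟨a, b, hab, rfl⟩ := Finset.card_eq_two.1 hs
  have key : ∀ a b : Fin r, a < b →
      ∑ j ∈ ({a, b} : Finset (Fin r)), ((-1 : ℤ) ^ ((({a, b} : Finset (Fin r)).filter
        fun x => x < j).card)) = 0 := by
    intro a b hlt
    rw [Finset.sum_pair hlt.ne]
    have h1 : (({a, b} : Finset (Fin r)).filter fun x => x < a) = ∅ :=
      filter_lt_min (by
        intro x hx
        rcases Finset.mem_insert.1 hx with rfl | hx
        · exact lt_irrefl x
        · rw [Finset.mem_singleton] at hx
          subst hx
          exact not_lt.2 hlt.le)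
    have h2 : (({a, b} : Finset (Fin r)).filter fun x => x < b) = {a} := by
      rw [Finset.filter_insert, if_pos hlt, Finset.filter_singleton, if_neg (lt_irrefl b)]
      rfl
    rw [h1, h2, Finset.card_empty, Finset.card_singleton, pow_zero, pow_one]
    omega
  rcases hab.lt_or_gt with hlt | hlt
  · exact key a b hlt
  · rw [Finset.pair_comm]
    exact key b a hlt

theorem cechMap_cechZero (f : MvPolynomial (Fin r) A) :
    cechMap A r 1 (cechZero A r f) = 0 := by
  classical
  funext S'
  refine qcoeff_inj fun m hm => ?_
  rw [qcoeff_cechMap _ _ hm, Pi.zero_apply, qcoeff_zero hm]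
  have hterm : ∀ j ∈ S'.1.attach,
      ((-1 : ℤ) ^ ((S'.1.filter fun i => i < j.1).card)) •
        qcoeff A r m (cechZero A r f
          ⟨S'.1.erase j.1, by simp [Finset.card_erase_of_mem j.2, S'.2]⟩) =
      ((-1 : ℤ) ^ ((S'.1.filter fun i => i < j.1).card)) • coeff m f := by
    intro j _
    rw [cechZero_apply, qcoeff_mk (fun i hi => hm i (Finset.erase_subset _ _ hi))]
  rw [Finset.sum_congr rfl hterm,
    Finset.sum_attach S'.1 (fun j => ((-1 : ℤ) ^ ((S'.1.filter fun i => i < j).card)) • coeff m f),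
    ← Finset.sum_smul, sign_sum_two S'.2, zero_smul]


variable (A r) in
/-- Totalized coefficient function: the `qcoeff` of a component of a Čech cochain,
extended by `0` to all finsets. -/
noncomputable def totQ {k : ℕ} (m : Fin r →₀ ℕ)
    (F : (S : {S : Finset (Fin r) // S.card = k}) →
      (MvPolynomial (Fin r) A ⧸ sncdIdeal A r S.1))
    (u : Finset (Fin r)) : A :=
  if h : u.card = k then qcoeff A r m (F ⟨u, h⟩) else 0

theorem totQ_eq {k : ℕ} {m : Fin r →₀ ℕ}
    {F : (S : {S : Finset (Fin r) // S.card = k}) →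
      (MvPolynomial (Fin r) A ⧸ sncdIdeal A r S.1)}
    {u : Finset (Fin r)} (h : u.card = k) :
    totQ A r m F u = qcoeff A r m (F ⟨u, h⟩) := dif_pos h

set_option maxHeartbeats 1000000 in
theorem cechMap_cechMap {k : ℕ}
    (F : (S : {S : Finset (Fin r) // S.card = k}) →
      (MvPolynomial (Fin r) A ⧸ sncdIdeal A r S.1)) :
    cechMap A r (k + 1) (cechMap A r k F) = 0 := by
  classical
  funext S''
  refine qcoeff_inj fun m hm => ?_
  rw [qcoeff_cechMap _ _ hm, Pi.zero_apply, qcoeff_zero hm]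
  set s := S''.1 with hsdef
  set h2 : Fin r → Fin r → A := fun x y =>
    ((-1 : ℤ) ^ ((s.filter fun w => w < x).card) *
      (-1 : ℤ) ^ (((s.erase x).filter fun w => w < y).card)) •
      totQ A r m F ((s.erase x).erase y) with hh2
  have h1 : ∀ j ∈ s.attach,
      ((-1 : ℤ) ^ ((s.filter fun i => i < j.1).card)) •
        qcoeff A r m (cechMap A r k F
          ⟨s.erase j.1, by simp [Finset.card_erase_of_mem j.2, hsdef, S''.2]⟩) =
      ∑ i ∈ s.erase j.1, h2 j.1 i := by
    intro j _
    rw [qcoeff_cechMap F _ (fun i hi => hm i (Finset.erase_subset _ _ hi)), Finset.smul_sum,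
      ← Finset.sum_attach (s.erase j.1) (fun y => h2 j.1 y)]
    refine Finset.sum_congr rfl fun i _ => ?_
    have hcard : ((s.erase j.1).erase i.1).card = k := by
      rw [Finset.card_erase_of_mem i.2, Finset.card_erase_of_mem j.2, S''.2]
      omega
    simp only [hh2]
    rw [smul_smul, totQ_eq hcard]
  rw [Finset.sum_congr rfl h1, Finset.sum_attach s (fun j => ∑ i ∈ s.erase j, h2 j i)]
  refine sum_antisymm s h2 ?_
  have haux : ∀ a b : Fin r, a ∈ s → b ∈ s → a < b → h2 a b = - h2 b a := by
    intro a b ha hb hab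
    simp only [hh2]
    rw [← filter_lt_erase_of_lt hab ha, filter_lt_erase_of_gt hab,
      Finset.erase_right_comm (a := b) (b := a)]
    rw [← neg_smul]
    congr 1
    ring
  intro i hi j hj hij
  rcases hij.lt_or_gt with hlt | hlt
  · exact haux i j hi hj hlt
  · rw [haux j i hj hi hlt, neg_neg]

set_option maxHeartbeats 4000000 in
theorem exists_cechMap_preimage {k : ℕ}
    (G : (S : {S : Finset (Fin r) // S.card = k + 1 + 1}) →
      (MvPolynomial (Fin r) A ⧸ sncdIdeal A r S.1))
    (hG : cechMap A r (k + 1 + 1) G = 0) :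
    ∃ F, cechMap A r (k + 1) F = G := by
  classical
  refine ⟨fun S => Submodule.Quotient.mk (∑ t ∈ (S.1ᶜ).attach,
    rho t.1 (Quotient.out (G ⟨insert t.1 S.1,
      by rw [Finset.card_insert_of_notMem (Finset.mem_compl.1 t.2), S.2]⟩))), ?_⟩
  set Fd : (S : {S : Finset (Fin r) // S.card = k + 1}) →
      (MvPolynomial (Fin r) A ⧸ sncdIdeal A r S.1) := fun S =>
    Submodule.Quotient.mk (∑ t ∈ (S.1ᶜ).attach,
      rho t.1 (Quotient.out (G ⟨insert t.1 S.1,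
        by rw [Finset.card_insert_of_notMem (Finset.mem_compl.1 t.2), S.2]⟩))) with hFd
  funext S'
  refine qcoeff_inj fun m hm => ?_
  rw [qcoeff_cechMap Fd S' hm]
  obtain ⟨j0, hj0⟩ : S'.1.Nonempty := Finset.card_pos.1 (by rw [S'.2]; omega)
  obtain ⟨t, htgap, htmin⟩ := gapMin_exists (hm j0 hj0)
  have hmt : m t = 0 := htgap.1
  have compF : ∀ (u : Finset (Fin r)) (hu : u.card = k + 1), (∀ i ∈ u, m i = 0) →
      qcoeff A r m (Fd ⟨u, hu⟩) =
        if t ∈ u then 0 else totQ A r m G (insert t u) := by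
    intro u hu hgood
    simp only [hFd]
    rw [qcoeff_mk hgood, coeff_sum]
    by_cases htu : t ∈ u
    · rw [if_pos htu]
      refine Finset.sum_eq_zero fun t' _ => ?_
      rw [coeff_rho, if_neg]
      intro hgap
      exact (Finset.mem_compl.1 t'.2) ((gapMin_unique hgap htgap) ▸ htu)
    · rw [if_neg htu,
        Finset.sum_eq_single_of_mem (⟨t, Finset.mem_compl.2 htu⟩ : {x // x ∈ uᶜ})
          (Finset.mem_attach _ _) (fun b _ hbne => by
            rw [coeff_rho, if_neg (fun hgap => hbne (Subtype.ext (gapMin_unique hgap htgap)))]),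
        coeff_rho, if_pos htgap,
        totQ_eq (by rw [Finset.card_insert_of_notMem htu, hu])]
      rfl
  have hterm : ∀ j ∈ S'.1.attach,
      ((-1 : ℤ) ^ ((S'.1.filter fun i => i < j.1).card)) •
        qcoeff A r m (Fd ⟨S'.1.erase j.1, by simp [Finset.card_erase_of_mem j.2, S'.2]⟩) =
      ((-1 : ℤ) ^ ((S'.1.filter fun i => i < j.1).card)) •
        (if t ∈ S'.1.erase j.1 then 0
          else totQ A r m G (insert t (S'.1.erase j.1))) := by
    intro j _
    rw [compF _ _ (fun i hi => hm i (Finset.erase_subset _ _ hi))]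
  rw [Finset.sum_congr rfl hterm]
  by_cases htS : t ∈ S'.1
  · rw [Finset.sum_eq_single_of_mem (⟨t, htS⟩ : {x // x ∈ S'.1}) (Finset.mem_attach _ _)
      (fun b _ hbne => by
        rw [if_pos (Finset.mem_erase.2
          ⟨fun he => hbne (Subtype.ext he.symm), htS⟩), smul_zero])]
    rw [if_neg (Finset.notMem_erase t S'.1)]
    have hzero : (S'.1.filter fun i => i < t) = ∅ :=
      filter_lt_min (fun x hx hlt => absurd (htmin x (hm x hx)) (not_le.2 hlt))
    rw [hzero, Finset.card_empty, pow_zero, one_smul, Finset.insert_erase htS, totQ_eq S'.2]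
  · have hterm2 : ∀ j ∈ S'.1.attach,
        (((-1 : ℤ) ^ ((S'.1.filter fun i => i < j.1).card)) •
          (if t ∈ S'.1.erase j.1 then 0
            else totQ A r m G (insert t (S'.1.erase j.1)))) =
        ((-1 : ℤ) ^ ((S'.1.filter fun i => i < j.1).card)) •
          totQ A r m G (insert t (S'.1.erase j.1)) := by
      intro j _
      rw [if_neg (fun hmem => htS (Finset.mem_of_mem_erase hmem))]
    rw [Finset.sum_congr rfl hterm2,
      Finset.sum_attach S'.1 (fun j => ((-1 : ℤ) ^ ((S'.1.filter fun i => i < j).card)) •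
        totQ A r m G (insert t (S'.1.erase j)))]
    have hins : (insert t S'.1).card = k + 1 + 1 + 1 := by
      rw [Finset.card_insert_of_notMem htS, S'.2]
    have hgood' : ∀ i ∈ insert t S'.1, m i = 0 := fun i hi =>
      (Finset.mem_insert.1 hi).elim (fun h => h ▸ hmt) (hm i)
    have h0 : qcoeff A r m (cechMap A r (k + 1 + 1) G ⟨insert t S'.1, hins⟩) = 0 := by
      rw [hG, Pi.zero_apply]
      exact qcoeff_zero hgood'
    rw [qcoeff_cechMap G _ hgood'] at h0
    have hterm3 : ∀ jj ∈ (insert t S'.1).attach,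
        ((-1 : ℤ) ^ (((insert t S'.1).filter fun i => i < jj.1).card)) •
          qcoeff A r m (G ⟨(insert t S'.1).erase jj.1,
            by simp [Finset.card_erase_of_mem jj.2, hins]⟩) =
        ((-1 : ℤ) ^ (((insert t S'.1).filter fun i => i < jj.1).card)) •
          totQ A r m G ((insert t S'.1).erase jj.1) := by
      intro jj _
      rw [totQ_eq (by rw [Finset.card_erase_of_mem jj.2, hins]; omega)]
    rw [Finset.sum_congr rfl hterm3,
      Finset.sum_attach (insert t S'.1)
        (fun jj => ((-1 : ℤ) ^ (((insert t S'.1).filter fun i => i < jj).card)) •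
          totQ A r m G ((insert t S'.1).erase jj)),
      Finset.sum_insert htS] at h0
    have hzt : ((insert t S'.1).filter fun i => i < t) = ∅ :=
      filter_lt_min (fun x hx => by
        rcases Finset.mem_insert.1 hx with rfl | hx
        · exact lt_irrefl x
        · exact not_lt.2 (htmin x (hm x hx)))
    rw [hzt, Finset.card_empty, pow_zero, one_smul, Finset.erase_insert htS] at h0
    have hterm4 : ∀ j ∈ S'.1,
        ((-1 : ℤ) ^ (((insert t S'.1).filter fun i => i < j).card)) •
          totQ A r m G ((insert t S'.1).erase j) =
        -(((-1 : ℤ) ^ ((S'.1.filter fun i => i < j).card)) •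
          totQ A r m G (insert t (S'.1.erase j))) := by
      intro j hj
      have htj : t < j := lt_of_le_of_ne (htmin j (hm j hj)) (fun he => htS (he ▸ hj))
      rw [filter_lt_insert htS htj, Finset.erase_insert_of_ne htj.ne, pow_succ, mul_smul,
        neg_one_smul, smul_neg]
    rw [Finset.sum_congr rfl hterm4, Finset.sum_neg_distrib, add_neg_eq_zero] at h0
    rw [← h0, totQ_eq S'.2]

set_option maxHeartbeats 4000000 in
theorem exists_cechZero_preimage
    (G : (S : {S : Finset (Fin r) // S.card = 1}) →
      (MvPolynomial (Fin r) A ⧸ sncdIdeal A r S.1))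
    (hG : cechMap A r 1 G = 0) : ∃ f, cechZero A r f = G := by
  classical
  refine ⟨∑ t : Fin r, rho t (Quotient.out (G ⟨{t}, Finset.card_singleton t⟩)), ?_⟩
  funext S'
  refine qcoeff_inj fun m hm => ?_
  rw [cechZero_apply, qcoeff_mk hm, coeff_sum]
  obtain ⟨a, ha⟩ := Finset.card_eq_one.1 S'.2
  have hma : m a = 0 := hm a (by rw [ha]; exact Finset.mem_singleton_self a)
  obtain ⟨t, htgap, htmin⟩ := gapMin_exists hma
  have hmt : m t = 0 := htgap.1
  rw [Finset.sum_eq_single_of_mem t (Finset.mem_univ t) (fun b _ hbne => by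
    rw [coeff_rho, if_neg (fun hgap => hbne (gapMin_unique hgap htgap))]),
    coeff_rho, if_pos htgap]
  have hcoefft : coeff m (Quotient.out (G ⟨{t}, Finset.card_singleton t⟩)) =
      qcoeff A r m (G ⟨{t}, Finset.card_singleton t⟩) := rfl
  rw [hcoefft]
  by_cases hta : t = a
  · subst hta
    have : (⟨{t}, Finset.card_singleton t⟩ : {S : Finset (Fin r) // S.card = 1}) = S' :=
      Subtype.ext (by rw [ha])
    rw [this]
  · have htla : t < a := lt_of_le_of_ne (htmin a hma) hta
    have htns : t ∉ ({a} : Finset (Fin r)) := by simp [hta]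
    have hins : ({t, a} : Finset (Fin r)).card = 1 + 1 := by
      rw [Finset.card_insert_of_notMem htns, Finset.card_singleton]
    have hgood' : ∀ i ∈ ({t, a} : Finset (Fin r)), m i = 0 := by
      intro i hi
      rcases Finset.mem_insert.1 hi with rfl | hi
      · exact hmt
      · rw [Finset.mem_singleton] at hi
        rw [hi]
        exact hma
    have h0 : qcoeff A r m (cechMap A r 1 G ⟨{t, a}, hins⟩) = 0 := by
      rw [hG, Pi.zero_apply]
      exact qcoeff_zero hgood'
    rw [qcoeff_cechMap G _ hgood'] at h0
    have hterm3 : ∀ jj ∈ ({t, a} : Finset (Fin r)).attach,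
        ((-1 : ℤ) ^ ((({t, a} : Finset (Fin r)).filter fun i => i < jj.1).card)) •
          qcoeff A r m (G ⟨({t, a} : Finset (Fin r)).erase jj.1,
            by simp [Finset.card_erase_of_mem jj.2, hins]⟩) =
        ((-1 : ℤ) ^ ((({t, a} : Finset (Fin r)).filter fun i => i < jj.1).card)) •
          totQ A r m G (({t, a} : Finset (Fin r)).erase jj.1) := by
      intro jj _
      rw [totQ_eq (by rw [Finset.card_erase_of_mem jj.2, hins])]
    rw [Finset.sum_congr rfl hterm3,
      Finset.sum_attach ({t, a} : Finset (Fin r))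
        (fun jj => ((-1 : ℤ) ^ ((({t, a} : Finset (Fin r)).filter fun i => i < jj).card)) •
          totQ A r m G (({t, a} : Finset (Fin r)).erase jj)),
      Finset.sum_pair htla.ne] at h0
    have hft : (({t, a} : Finset (Fin r)).filter fun i => i < t) = ∅ :=
      filter_lt_min (fun x hx => by
        rcases Finset.mem_insert.1 hx with rfl | hx
        · exact lt_irrefl x
        · rw [Finset.mem_singleton] at hx
          rw [hx]
          exact not_lt.2 htla.le)
    have hfa : (({t, a} : Finset (Fin r)).filter fun i => i < a) = {t} := by
      rw [Finset.filter_insert, if_pos htla, Finset.filter_singleton, if_neg (lt_irrefl a)]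
      rfl
    rw [hft, hfa, Finset.card_empty, Finset.card_singleton, pow_zero, one_smul, pow_one,
      Finset.erase_insert htns, Finset.erase_insert_of_ne hta, Finset.erase_singleton,
      Finset.insert_empty, neg_one_smul, add_neg_eq_zero] at h0
    rw [← totQ_eq (Finset.card_singleton t), ← h0,
      totQ_eq (u := {a}) (Finset.card_singleton a)]
    have : (⟨{a}, Finset.card_singleton a⟩ : {S : Finset (Fin r) // S.card = 1}) = S' :=
      Subtype.ext (by rw [ha])
    rw [this]

variable (A) (r)

/-- Exactness of the Čech-type resolution
`0 → (x₁⋯x_r) → R → ⊕_{|S|=1} R_S → ⊕_{|S|=2} R_S → ⋯ → R_{{1,…,r}} → 0`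
of the ideal generated by the product of the variables of `R = A[x₁,…,x_r]`:
the kernel of `R → ⊕_{|S|=1} R_S` is exactly the ideal `(x₁⋯x_r)`, and at every later
stage the kernel of the outgoing differential equals the range of the incoming one
(for indices beyond `r` all modules vanish, and the case `k+1 = r` expresses the
surjectivity of the last map onto `R_{{1,…,r}}`). -/
theorem cech_resolution_of_product_ideal_exact (hr : 1 ≤ r) :
    (LinearMap.ker (cechZero A r) =
      Ideal.span {∏ i : Fin r, (X i : MvPolynomial (Fin r) A)}) ∧
    (LinearMap.ker (cechMap A r 1) = LinearMap.range (cechZero A r)) ∧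
    (∀ k : ℕ, LinearMap.ker (cechMap A r (k + 2)) =
      LinearMap.range (cechMap A r (k + 1))) := by
  refine ⟨ker_cechZero, ?_, ?_⟩
  · apply le_antisymm
    · intro G hG
      obtain ⟨f, hf⟩ := exists_cechZero_preimage G (LinearMap.mem_ker.1 hG)
      exact ⟨f, hf⟩
    · rintro _ ⟨f, rfl⟩
      exact LinearMap.mem_ker.2 (cechMap_cechZero f)
  · intro k
    apply le_antisymm
    · intro G hG
      obtain ⟨F, hF⟩ := exists_cechMap_preimage G (LinearMap.mem_ker.1 hG)
      exact ⟨F, hF⟩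
    · rintro _ ⟨F, rfl⟩
      exact LinearMap.mem_ker.2 (cechMap_cechMap F)
end
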